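/- Let Γ be a finite simple graph such that every vertex subset S ⊆ V(Γ) with |S| ≤ 12 satisfies e(Γ|_S) < (5/3)·|S|, where e(Γ|_S) is the number of edges of the induced subgraph on S. Fix two distinct vertices x_1, x_2 ∈ V(Γ) and define W_0 = {x_1, x_2} and, inductively, W_{i+1} = W_i ∪ {v ∈ V(Γ) : v has at least two neighbours in W_i}, and let W = ⋃_{i ≥ 0} W_i (the (K*,T*)-neighbourhood, i.e., the closure of {x_1,x_2} under adding vertices with at least two neighbours already present). Then |W| ≤ 11. -/
import Mathlib


open Finset

variable {V : Type*} [Fintype V] [DecidableEq V]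

/-- The number of edges of `Γ` with both endpoints in `A` and at least one endpoint
in `A \ B`; this is `e(A,B)` from the paper. -/
noncomputable def edgeCount (Γ : SimpleGraph V) (A B : Finset V) : ℕ :=
  Nat.card {e : Sym2 V // e ∈ Γ.edgeSet ∧ (∀ x ∈ e, x ∈ A) ∧ ∃ x ∈ e, x ∈ A ∧ x ∉ B}

/-- `f_α(A,B) = v(A,B) - α ⬝ e(A,B)`. -/
noncomputable def fW (Γ : SimpleGraph V) (α : ℝ) (A B : Finset V) : ℝ :=
  ((A \ B).card : ℝ) - α * (edgeCount Γ A B : ℝ)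

/-- The pair `(A,B)` is `α`-safe. -/
def IsSafe (Γ : SimpleGraph V) (α : ℝ) (A B : Finset V) : Prop :=
  ∀ C : Finset V, B ⊂ C → C ⊆ A → 0 < fW Γ α C B

/-- The pair `(A,B)` is `α`-rigid. -/
def IsRigid (Γ : SimpleGraph V) (α : ℝ) (A B : Finset V) : Prop :=
  ∀ C : Finset V, B ⊆ C → C ⊂ A → fW Γ α A C < 0

/-- The pair `(A,B)` is `α`-neutral. -/
def IsNeutral (Γ : SimpleGraph V) (α : ℝ) (A B : Finset V) : Prop :=
  (∀ C : Finset V, B ⊂ C → C ⊂ A → 0 < fW Γ α C B) ∧ fW Γ α A B = 0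

/-- Edges of `Γ` with both endpoints in `S`. -/
def ES (Γ : SimpleGraph V) [DecidableRel Γ.Adj] (S : Finset V) : Finset (Sym2 V) :=
  Γ.edgeFinset.filter (fun e => ∀ x ∈ e, x ∈ S)

lemma edgeCount_empty (Γ : SimpleGraph V) [DecidableRel Γ.Adj] (S : Finset V) :
    edgeCount Γ S ∅ = (ES Γ S).card := by
  rw [edgeCount, ← Set.ncard_coe_finset]
  rw [show {e : Sym2 V // e ∈ Γ.edgeSet ∧ (∀ x ∈ e, x ∈ S) ∧ ∃ x ∈ e, x ∈ S ∧ x ∉ (∅ : Finset V)}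
      = ↥{e : Sym2 V | e ∈ Γ.edgeSet ∧ (∀ x ∈ e, x ∈ S) ∧ ∃ x ∈ e, x ∈ S ∧ x ∉ (∅ : Finset V)} from rfl]
  rw [Nat.card_coe_set_eq]
  congr 1
  ext e
  simp only [Set.mem_setOf_eq, ES, coe_filter, SimpleGraph.mem_edgeFinset, notMem_empty,
    not_false_iff, and_true]
  constructor
  · rintro ⟨h1, h2, _⟩; exact ⟨h1, h2⟩
  · rintro ⟨h1, h2⟩
    refine ⟨h1, h2, ?_⟩
    induction e using Sym2.ind with
    | _ a b => exact ⟨a, Sym2.mem_mk_left a b, h2 a (Sym2.mem_mk_left a b)⟩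

lemma ES_insert (Γ : SimpleGraph V) [DecidableRel Γ.Adj] (T : Finset V) (v : V) (hv : v ∉ T) :
    (ES Γ T).card + (Γ.neighborFinset v ∩ T).card ≤ (ES Γ (insert v T)).card := by
  classical
  set B := (Γ.neighborFinset v ∩ T).image (fun u => s(v, u)) with hB
  have hBcard : B.card = (Γ.neighborFinset v ∩ T).card := by
    apply card_image_of_injOn
    intro a _ b _ hab
    exact (Sym2.congr_right).1 hab
  have hdisj : Disjoint (ES Γ T) B := by
    rw [disjoint_left]
    intro e heT heB
    simp only [hB, mem_image, mem_inter] at heB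
    obtain ⟨u, ⟨_, _⟩, rfl⟩ := heB
    simp only [ES, mem_filter] at heT
    exact hv (heT.2 v (Sym2.mem_mk_left v u))
  have hsub : ES Γ T ∪ B ⊆ ES Γ (insert v T) := by
    intro e he
    rcases mem_union.1 he with h | h
    · simp only [ES, mem_filter] at h ⊢
      exact ⟨h.1, fun x hx => mem_insert_of_mem (h.2 x hx)⟩
    · simp only [hB, mem_image, mem_inter, SimpleGraph.mem_neighborFinset] at h
      obtain ⟨u, ⟨hadj, huT⟩, rfl⟩ := h
      simp only [ES, mem_filter, SimpleGraph.mem_edgeFinset]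
      refine ⟨hadj, ?_⟩
      intro x hx
      rcases Sym2.mem_iff.1 hx with rfl | rfl
      · exact mem_insert_self _ _
      · exact mem_insert_of_mem huT
  calc (ES Γ T).card + (Γ.neighborFinset v ∩ T).card
      = (ES Γ T ∪ B).card := by rw [card_union_of_disjoint hdisj, hBcard]
    _ ≤ _ := card_le_card hsub

lemma Wmono (Γ : SimpleGraph V) [DecidableRel Γ.Adj] (W : ℕ → Finset V)
    (hWsucc : ∀ i, W (i + 1) =
      W i ∪ Finset.univ.filter (fun v => 2 ≤ (Γ.neighborFinset v ∩ W i).card)) :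
    ∀ i j, i ≤ j → W i ⊆ W j := by
  intro i j hij
  induction j with
  | zero => simpa [Nat.le_zero.1 hij]
  | succ j ih =>
    rcases lt_or_ge i (j+1) with h | h
    · exact (ih (Nat.lt_succ_iff.1 h)).trans (by rw [hWsucc j]; exact subset_union_left)
    · have : i = j + 1 := le_antisymm hij h
      subst this; exact Finset.Subset.refl _

lemma chain (Γ : SimpleGraph V) [DecidableRel Γ.Adj] (x1 x2 : V) (hx : x1 ≠ x2)
    (W : ℕ → Finset V) (hW0 : W 0 = {x1, x2})
    (hWsucc : ∀ i, W (i + 1) =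
      W i ∪ Finset.univ.filter (fun v => 2 ≤ (Γ.neighborFinset v ∩ W i).card)) :
    ∀ i n, 2 ≤ n → n ≤ (W i).card →
    ∃ S, S ⊆ W i ∧ S.card = n ∧ 2 * n ≤ (ES Γ S).card + 4 := by
  have hcard0 : (W 0).card = 2 := by
    rw [hW0]; rw [card_insert_of_notMem (by simpa), card_singleton]
  intro i
  induction i with
  | zero =>
    intro n h2 hn
    have : n = 2 := le_antisymm (hn.trans_eq hcard0) h2
    subst this
    exact ⟨W 0, Finset.Subset.refl _, hcard0, by omega⟩
  | succ i ih =>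
    intro n h2 hn
    rcases le_or_gt n (W i).card with h | h
    · obtain ⟨S, hS1, hS2, hS3⟩ := ih n h2 h
      exact ⟨S, hS1.trans (Wmono Γ W hWsucc i (i+1) (Nat.le_succ i)), hS2, hS3⟩
    · have h2i : 2 ≤ (W i).card := hcard0 ▸ card_le_card (Wmono Γ W hWsucc 0 i (Nat.zero_le i))
      have key : ∀ m, (W i).card + m ≤ (W (i+1)).card →
          ∃ S, W i ⊆ S ∧ S ⊆ W (i+1) ∧ S.card = (W i).card + m ∧
            2 * S.card ≤ (ES Γ S).card + 4 := by
        intro m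
        induction m with
        | zero =>
          intro _
          obtain ⟨S, hS1, hS2, hS3⟩ := ih (W i).card h2i le_rfl
          have hSeq : S = W i := Finset.eq_of_subset_of_card_le hS1 (le_of_eq hS2.symm)
          rw [hSeq] at hS3
          exact ⟨W i, Finset.Subset.refl _, Wmono Γ W hWsucc i (i+1) (Nat.le_succ i),
            by omega, by omega⟩
        | succ m ihm =>
          intro hm
          obtain ⟨S, hWS, hSW, hScard, hSe⟩ := ihm (by omega)
          have hss : S ⊂ W (i+1) := hSW.ssubset_of_ne (by
            intro h; rw [h] at hScard; omega)
          obtain ⟨v, hv1, hv2⟩ := Finset.exists_of_ssubset hss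
          have hvWi : v ∉ W i := fun h => hv2 (hWS h)
          have hv2n : 2 ≤ (Γ.neighborFinset v ∩ W i).card := by
            rw [hWsucc i] at hv1
            rcases mem_union.1 hv1 with h | h
            · exact absurd h hvWi
            · exact (mem_filter.1 h).2
          have hv2S : 2 ≤ (Γ.neighborFinset v ∩ S).card :=
            hv2n.trans (card_le_card (inter_subset_inter (Finset.Subset.refl _) hWS))
          have hins := ES_insert Γ S v hv2
          refine ⟨insert v S, hWS.trans (subset_insert _ _), insert_subset hv1 hSW, ?_, ?_⟩
          · rw [card_insert_of_notMem hv2]; omega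
          · rw [card_insert_of_notMem hv2]; omega
      obtain ⟨S, hWS, hSW, hScard, hSe⟩ := key (n - (W i).card) (by omega)
      exact ⟨S, hSW, by omega, by omega⟩

/-- if every subset of at most 12 vertices spans fewer than
`(5/3)·|S|` edges, then the `(K*,T*)`-closure of two distinct vertices has at
most 11 vertices. -/
theorem stmt13 (Γ : SimpleGraph V) [DecidableRel Γ.Adj]
    (hdens : ∀ S : Finset V, S.card ≤ 12 → (edgeCount Γ S ∅ : ℝ) < 5/3 * S.card)
    (x1 x2 : V) (hx : x1 ≠ x2) (W : ℕ → Finset V)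
    (hW0 : W 0 = {x1, x2})
    (hWsucc : ∀ i, W (i + 1) =
      W i ∪ Finset.univ.filter (fun v => 2 ≤ (Γ.neighborFinset v ∩ W i).card)) :
    (⋃ i, (W i : Set V)).ncard ≤ 11 := by
  -- the sequence stabilizes
  have hfix : ∃ i, W (i + 1) = W i := by
    by_contra hc
    push_neg at hc
    have hgrow : ∀ i, i ≤ (W i).card := by
      intro i
      induction i with
      | zero => exact Nat.zero_le _
      | succ i ih =>
        have hss : W i ⊂ W (i + 1) :=
          (by rw [hWsucc i]; exact subset_union_left : W i ⊆ W (i+1)).ssubset_of_ne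
            (fun h => hc i h.symm)
        have := card_lt_card hss
        omega
    have h1 := hgrow (Fintype.card V + 1)
    have h2 := card_le_univ (W (Fintype.card V + 1))
    omega
  obtain ⟨i, hi⟩ := hfix
  have hstab : ∀ j, W (i + j) = W i := by
    intro j
    induction j with
    | zero => rfl
    | succ j ih =>
      have : i + (j + 1) = (i + j) + 1 := by omega
      rw [this, hWsucc (i + j), ih, ← hWsucc i, hi]
  have hsub : ∀ j, W j ⊆ W i := by
    intro j
    calc W j ⊆ W (i + j) := Wmono Γ W hWsucc j (i + j) (by omega)
      _ = W i := hstab j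
  have hUnion : (⋃ j, (W j : Set V)) = (W i : Set V) := by
    apply Set.Subset.antisymm
    · exact Set.iUnion_subset (fun j => by exact_mod_cast hsub j)
    · exact Set.subset_iUnion (fun j => ((W j : Set V))) i
  rw [hUnion, Set.ncard_coe_finset]
  by_contra hlt
  push_neg at hlt
  have h12 : 12 ≤ (W i).card := by omega
  obtain ⟨S, hS1, hS2, hS3⟩ := chain Γ x1 x2 hx W hW0 hWsucc i 12 (by omega) h12
  have hd := hdens S (by omega)
  rw [edgeCount_empty, hS2] at hd
  have : (20 : ℝ) ≤ ((ES Γ S).card : ℝ) := by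
    have : 20 ≤ (ES Γ S).card := by omega
    exact_mod_cast this
  norm_num at hd
  linarith
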